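/- Taylor–Proudman theorem in ℝ⁴ with fast simple rotation: let λ₁ ∈ ℝ with λ₁ ≠ 0, let u : ℝ⁴ → ℝ⁴ be continuously differentiable and Π : ℝ⁴ → ℝ twice continuously differentiable such that 2λ₁(−u₂(x), u₁(x), 0, 0) = −∇Π(x) for all x ∈ ℝ⁴. Then everywhere: u_{1,1} + u_{2,2} = 0 (horizontal incompressibility in the rotating plane) and u_{1,3} = u_{1,4} = u_{2,3} = u_{2,4} = 0 (cylinder conditions: the horizontal velocity (u₁, u₂) is independent of both axes x₃, x₄ perpendicular to the rotating plane), while no constraint is imposed on u₃ or u₄. -/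

import Mathlib

/-!
Geostrophic balance says that `(u₁, u₂) = (2λ₁)⁻¹ (-∂₂Π, ∂₁Π)`, i.e. `Π / (2λ₁)` is a stream
function for the horizontal velocity, while `∂₃Π = ∂₄Π = 0`. Symmetry of second derivatives of
the `C²` pressure then gives `∂₁u₁ + ∂₂u₂ ∝ ∂₂∂₁Π - ∂₁∂₂Π = 0` and `∂ₖuᵢ ∝ ∂ᵢ∂ₖΠ = 0` for
`k = 3, 4`.
-/

/-- The partial derivative `∂ᵢ f` of a scalar function on `ℝ^n` at `x`. -/
noncomputable def pd {n : ℕ} (i : Fin n) (f : (Fin n → ℝ) → ℝ) (x : Fin n → ℝ) : ℝ :=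
  fderiv ℝ f x (Pi.single i 1)

section PartialDerivatives

variable {n : ℕ} {f : (Fin n → ℝ) → ℝ} {x : Fin n → ℝ}

lemma pd_const (c : ℝ) (i : Fin n) (x : Fin n → ℝ) : pd i (fun _ => c) x = 0 := by
  simp [pd]

lemma pd_const_mul (hf : DifferentiableAt ℝ f x) (c : ℝ) (i : Fin n) :
    pd i (fun y => c * f y) x = c * pd i f x := by
  simp [pd, fderiv_const_mul hf c]

lemma differentiableAt_pd (hf : ContDiffAt ℝ 2 f x) (j : Fin n) :
    DifferentiableAt ℝ (pd j f) x :=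
  ((hf.fderiv_right (m := 1) le_rfl).differentiableAt one_ne_zero).clm_apply
    (differentiableAt_const _)

lemma pd_pd_eq_fderiv_fderiv (hf : ContDiffAt ℝ 2 f x) (i j : Fin n) :
    pd i (pd j f) x = fderiv ℝ (fderiv ℝ f) x (Pi.single i 1) (Pi.single j 1) := by
  have hf' : DifferentiableAt ℝ (fderiv ℝ f) x :=
    (hf.fderiv_right (m := 1) le_rfl).differentiableAt one_ne_zero
  change fderiv ℝ (fun y => fderiv ℝ f y (Pi.single j 1)) x (Pi.single i 1) = _
  simp [fderiv_clm_apply hf' (differentiableAt_const _)]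

lemma pd_comm (hf : ContDiffAt ℝ 2 f x) (i j : Fin n) :
    pd i (pd j f) x = pd j (pd i f) x := by
  rw [pd_pd_eq_fderiv_fderiv hf, pd_pd_eq_fderiv_fderiv hf]
  exact hf.isSymmSndFDerivAt (by simp) _ _

lemma pd_pd_eq_zero_of_pd_eq_zero {k : Fin n} (hf : ContDiffAt ℝ 2 f x)
    (hk : ∀ y, pd k f y = 0) (j : Fin n) : pd k (pd j f) x = 0 := by
  rw [pd_comm hf, show pd k f = fun _ => 0 from funext hk, pd_const]

end PartialDerivatives

theorem taylor_proudman_R4_simple_rotation_general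
    (lam₁ : ℝ) (h₁ : lam₁ ≠ 0)
    (u : (Fin 4 → ℝ) → (Fin 4 → ℝ))
    (Pr : (Fin 4 → ℝ) → ℝ) (hPr : ContDiff ℝ 2 Pr)
    (hbal : ∀ x : Fin 4 → ℝ,
      2 * lam₁ * (-(u x 1)) = -(pd 0 Pr x) ∧
      2 * lam₁ * u x 0 = -(pd 1 Pr x) ∧
      (0 : ℝ) = -(pd 2 Pr x) ∧
      (0 : ℝ) = -(pd 3 Pr x)) :
    ∀ x : Fin 4 → ℝ,
      pd 0 (fun y => u y 0) x + pd 1 (fun y => u y 1) x = 0 ∧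
      pd 2 (fun y => u y 0) x = 0 ∧
      pd 3 (fun y => u y 0) x = 0 ∧
      pd 2 (fun y => u y 1) x = 0 ∧
      pd 3 (fun y => u y 1) x = 0 := by
  have h2lam : 2 * lam₁ ≠ 0 := mul_ne_zero two_ne_zero h₁
  have hu₀ : (fun y => u y 0) = fun y => -(2 * lam₁)⁻¹ * pd 1 Pr y := by
    funext y
    field_simp
    linarith [(hbal y).2.1]
  have hu₁ : (fun y => u y 1) = fun y => (2 * lam₁)⁻¹ * pd 0 Pr y := by
    funext y
    field_simp
    linarith [(hbal y).1]
  have hPr₂ (y : Fin 4 → ℝ) : pd 2 Pr y = 0 := by linarith [(hbal y).2.2.1]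
  have hPr₃ (y : Fin 4 → ℝ) : pd 3 Pr y = 0 := by linarith [(hbal y).2.2.2]
  intro x
  have hPrx := hPr.contDiffAt (x := x)
  simp only [hu₀, hu₁, pd_const_mul (differentiableAt_pd hPrx _),
    pd_pd_eq_zero_of_pd_eq_zero hPrx hPr₂, pd_pd_eq_zero_of_pd_eq_zero hPrx hPr₃]
  refine ⟨?_, by simp, by simp, by simp, by simp⟩
  rw [pd_comm hPrx 0 1]
  ring

/-- Taylor–Proudman theorem in `ℝ⁴` with fast simple rotation (rate
`λ₁ ≠ 0` in the `x₁`-`x₂` plane): geostrophic balance implies horizontal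
incompressibility in the rotating plane and the cylinder conditions — the horizontal
velocity `(u₁, u₂)` is independent of both axes `x₃, x₄` (0-indexed coordinates). -/
theorem taylor_proudman_R4_simple_rotation
    (lam₁ : ℝ) (h₁ : lam₁ ≠ 0)
    (u : (Fin 4 → ℝ) → (Fin 4 → ℝ)) (hu : ContDiff ℝ 1 u)
    (Pr : (Fin 4 → ℝ) → ℝ) (hPr : ContDiff ℝ 2 Pr)
    (hbal : ∀ x : Fin 4 → ℝ,
      2 * lam₁ * (-(u x 1)) = -(pd 0 Pr x) ∧
      2 * lam₁ * u x 0 = -(pd 1 Pr x) ∧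
      (0 : ℝ) = -(pd 2 Pr x) ∧
      (0 : ℝ) = -(pd 3 Pr x)) :
    ∀ x : Fin 4 → ℝ,
      pd 0 (fun y => u y 0) x + pd 1 (fun y => u y 1) x = 0 ∧
      pd 2 (fun y => u y 0) x = 0 ∧
      pd 3 (fun y => u y 0) x = 0 ∧
      pd 2 (fun y => u y 1) x = 0 ∧
      pd 3 (fun y => u y 1) x = 0 :=
  taylor_proudman_R4_simple_rotation_general lam₁ h₁ u Pr hPr hbal
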